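/- Let L(f, y) be convex and lower-semicontinuous in its first argument, let w ∈ ℝ^d have all components nonzero, and let w ⊗ Δ denote componentwise product. Then for any norm ‖·‖, any x, β ∈ ℝ^d, y ∈ ℝ, and δ ≥ 0: max_{‖w ⊗ Δ‖ ≤ δ} L(⟨x+Δ, β⟩, y) = max_{s ∈ {−1,1}} L(⟨x,β⟩ + δ·s·‖w⁻¹ ⊗ β‖_*, y), where w⁻¹ = (1/w₁, …, 1/w_d). -/

import Mathlib

/-!
Substituting `Δ' = w ⊗ Δ` turns `⟨Δ, β⟩` into `⟨Δ', w⁻¹ ⊗ β⟩`, so as `Δ` ranges over the weighted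
ball `‖w ⊗ Δ‖ ≤ δ`, the value `⟨x + Δ, β⟩` stays in the interval `⟨x, β⟩ ± δ ‖w⁻¹ ⊗ β‖_*` and
attains both endpoints, because the dual norm is a maximum over the compact unit ball. A convex
function of one real variable attains its maximum over such a set at an endpoint.
-/

open Set

theorem Seminorm.exists_isMaxOn_closedBall_of_finiteDimensional {E : Type*} [AddCommGroup E]
    [Module ℝ E] [FiniteDimensional ℝ E] (p : Seminorm ℝ E) (hp : ∀ v, p v = 0 → v = 0)
    (f : E →ₗ[ℝ] ℝ) : ∃ u ∈ p.closedBall 0 1, IsMaxOn f (p.closedBall 0 1) u := by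
  let _ : NormedAddCommGroup E :=
    AddGroupNorm.toNormedAddCommGroup { p.toAddGroupSeminorm with eq_zero_of_map_eq_zero' := hp }
  let : NormedSpace ℝ E := ⟨fun c u => (map_smul_eq_mul p c u).le⟩
  have hball : p.closedBall 0 1 = Metric.closedBall (0 : E) 1 := by
    ext u; simp; rfl
  rw [hball]
  exact (isCompact_closedBall 0 1).exists_isMaxOn ⟨0, Metric.mem_closedBall_self zero_le_one⟩
    f.continuous_of_finiteDimensional.continuousOn

theorem ConvexOn.isGreatest_image_of_subset_Icc {𝕜 β : Type*} [Field 𝕜] [LinearOrder 𝕜]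
    [IsStrictOrderedRing 𝕜] [AddCommGroup β] [LinearOrder β] [IsOrderedAddMonoid β]
    [Module 𝕜 β] [IsStrictOrderedModule 𝕜 β] {φ : 𝕜 → β} {S : Set 𝕜} {a b : 𝕜}
    (hφ : ConvexOn 𝕜 (Icc a b) φ) (hS : S ⊆ Icc a b) (ha : a ∈ S) (hb : b ∈ S) :
    IsGreatest (φ '' S) (max (φ a) (φ b)) := by
  refine ⟨?_, ?_⟩
  · rcases max_choice (φ a) (φ b) with h | h <;> rw [h]
    exacts [mem_image_of_mem φ ha, mem_image_of_mem φ hb]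
  · rintro _ ⟨z, hz, rfl⟩
    exact hφ.le_max_of_mem_Icc (hS ha) (hS hb) (hS hz)

noncomputable def dualNorm' {d : ℕ} (p : Seminorm ℝ (Fin d → ℝ)) (v : Fin d → ℝ) : ℝ :=
  sSup {t | ∃ x : Fin d → ℝ, p x ≤ 1 ∧ t = ∑ j, x j * v j}

section DualNorm

variable {d : ℕ} {p : Seminorm ℝ (Fin d → ℝ)}

/-- For a mere seminorm this set can be unbounded, and `dualNorm'` is then the junk `sSup = 0`. -/
theorem isGreatest_dualNorm' (hp : ∀ v, p v = 0 → v = 0) (v : Fin d → ℝ) :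
    IsGreatest {t | ∃ x : Fin d → ℝ, p x ≤ 1 ∧ t = ∑ j, x j * v j} (dualNorm' p v) := by
  obtain ⟨u, hu, hmax⟩ :=
    p.exists_isMaxOn_closedBall_of_finiteDimensional hp ((dotProductBilin ℝ ℝ).flip v)
  have hu_greatest : IsGreatest {t | ∃ x : Fin d → ℝ, p x ≤ 1 ∧ t = ∑ j, x j * v j}
      (∑ j, u j * v j) := by
    refine ⟨⟨u, p.mem_closedBall_zero.1 hu, rfl⟩, ?_⟩
    rintro _ ⟨x, hx, rfl⟩
    exact hmax (p.mem_closedBall_zero.2 hx)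
  rwa [dualNorm', hu_greatest.csSup_eq]

theorem dualNorm'_nonneg (hp : ∀ v, p v = 0 → v = 0) (v : Fin d → ℝ) : 0 ≤ dualNorm' p v :=
  (isGreatest_dualNorm' hp v).2 ⟨0, by simp⟩

theorem sum_mul_le_mul_dualNorm' (hp : ∀ v, p v = 0 → v = 0) (u v : Fin d → ℝ) :
    ∑ j, u j * v j ≤ p u * dualNorm' p v := by
  rcases (apply_nonneg p u).eq_or_lt with hu | hu
  · simp [hp u hu.symm]
  have hunit : p ((p u)⁻¹ • u) ≤ 1 := by
    rw [map_smul_eq_mul, Real.norm_eq_abs, abs_of_pos (inv_pos.2 hu), inv_mul_cancel₀ hu.ne']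
  have hle := (isGreatest_dualNorm' hp v).2 ⟨_, hunit, rfl⟩
  simp only [Pi.smul_apply, smul_eq_mul, mul_assoc, ← Finset.mul_sum] at hle
  rwa [inv_mul_le_iff₀ hu] at hle

theorem abs_sum_mul_le_mul_dualNorm' (hp : ∀ v, p v = 0 → v = 0) (u v : Fin d → ℝ) :
    |∑ j, u j * v j| ≤ p u * dualNorm' p v :=
  abs_le'.2 ⟨sum_mul_le_mul_dualNorm' hp u v, by
    simpa [neg_mul, Finset.sum_neg_distrib] using sum_mul_le_mul_dualNorm' hp (-u) v⟩

end DualNorm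

section Weighted

variable {d : ℕ} {p : Seminorm ℝ (Fin d → ℝ)} {w : Fin d → ℝ}

theorem sum_mul_eq_sum_weight_mul_div (hw : ∀ j, w j ≠ 0) (Δ β : Fin d → ℝ) :
    ∑ j, Δ j * β j = ∑ j, (w j * Δ j) * (β j / w j) :=
  Finset.sum_congr rfl fun j _ => by field_simp [hw j]

theorem abs_sum_mul_le_of_weighted_le (hp : ∀ v, p v = 0 → v = 0) (hw : ∀ j, w j ≠ 0)
    {Δ : Fin d → ℝ} {δ : ℝ} (hΔ : p (fun j => w j * Δ j) ≤ δ) (β : Fin d → ℝ) :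
    |∑ j, Δ j * β j| ≤ δ * dualNorm' p (fun j => β j / w j) := by
  rw [sum_mul_eq_sum_weight_mul_div hw]
  exact (abs_sum_mul_le_mul_dualNorm' hp _ _).trans
    (mul_le_mul_of_nonneg_right hΔ (dualNorm'_nonneg hp _))

theorem exists_weighted_le_sum_mul_eq (hp : ∀ v, p v = 0 → v = 0) (hw : ∀ j, w j ≠ 0)
    (β : Fin d → ℝ) (c : ℝ) :
    ∃ Δ : Fin d → ℝ, p (fun j => w j * Δ j) ≤ |c| ∧
      ∑ j, Δ j * β j = c * dualNorm' p (fun j => β j / w j) := by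
  obtain ⟨u, hu, hu_eq⟩ := (isGreatest_dualNorm' hp (fun j => β j / w j)).1
  refine ⟨fun j => c * u j / w j, ?_, ?_⟩
  · have hscale : (fun j => w j * (c * u j / w j)) = c • u := by
      funext j; field_simp [hw j]; rfl
    rw [hscale, map_smul_eq_mul, Real.norm_eq_abs]
    exact mul_le_of_le_one_right (abs_nonneg c) hu
  · rw [sum_mul_eq_sum_weight_mul_div hw, hu_eq, Finset.mul_sum]
    exact Finset.sum_congr rfl fun j _ => by field_simp [hw j]

end Weighted

theorem stmt4_general {d : ℕ} (p : Seminorm ℝ (Fin d → ℝ)) (hp : ∀ v, p v = 0 → v = 0)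
    (L : ℝ → ℝ → ℝ) (y : ℝ)
    (hconv : ConvexOn ℝ Set.univ (fun f => L f y))
    (w : Fin d → ℝ) (hw : ∀ j, w j ≠ 0)
    (x β : Fin d → ℝ) (δ : ℝ) (hδ : 0 ≤ δ) :
    IsGreatest {t | ∃ Δ : Fin d → ℝ, p (fun j => w j * Δ j) ≤ δ ∧
        t = L (∑ j, (x j + Δ j) * β j) y}
      (max (L ((∑ j, x j * β j) + δ * dualNorm' p (fun j => β j / w j)) y)
           (L ((∑ j, x j * β j) - δ * dualNorm' p (fun j => β j / w j)) y)) := by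
  set a := ∑ j, x j * β j
  set D := dualNorm' p (fun j => β j / w j)
  have hsplit (Δ : Fin d → ℝ) : ∑ j, (x j + Δ j) * β j = a + ∑ j, Δ j * β j := by
    simp only [add_mul, Finset.sum_add_distrib, a]
  let S := (fun Δ : Fin d → ℝ => ∑ j, (x j + Δ j) * β j) '' {Δ | p (fun j => w j * Δ j) ≤ δ}
  have hS : S ⊆ Icc (a - δ * D) (a + δ * D) := by
    rintro _ ⟨Δ, hΔ, rfl⟩
    dsimp only
    rw [hsplit, ← mem_Icc_iff_abs_le, sub_add_cancel_left, abs_neg]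
    exact abs_sum_mul_le_of_weighted_le hp hw hΔ β
  have hmem (c : ℝ) (hc : |c| = δ) : a + c * D ∈ S := by
    obtain ⟨Δ, hΔ, hsum⟩ := exists_weighted_le_sum_mul_eq hp hw β c
    exact ⟨Δ, hc ▸ hΔ, (hsplit Δ).trans (by rw [hsum])⟩
  have hgreatest := (hconv.subset (subset_univ _) (convex_Icc _ _)).isGreatest_image_of_subset_Icc
    hS (by simpa [neg_mul, sub_eq_add_neg] using hmem (-δ) (by simp [abs_of_nonneg hδ]))
    (hmem δ (abs_of_nonneg hδ))
  have hset : {t | ∃ Δ : Fin d → ℝ, p (fun j => w j * Δ j) ≤ δ ∧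
      t = L (∑ j, (x j + Δ j) * β j) y} = (fun f => L f y) '' S := by
    ext t; simp [S, eq_comm]
  rw [hset, max_comm]
  exact hgreatest

/-- Tractable reformulation of adaptive (weighted) adversarial training: for `L` convex and
lower semicontinuous in its first argument and a weight vector `w` with nonzero entries,
`max_{‖w ⊗ Δ‖ ≤ δ} L(⟨x+Δ, β⟩, y) = max_{s ∈ {−1,1}} L(⟨x,β⟩ + δ·s·‖w⁻¹ ⊗ β‖₊, y)`. -/
theorem stmt4 {d : ℕ} (p : Seminorm ℝ (Fin d → ℝ)) (hp : ∀ v, p v = 0 → v = 0)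
    (L : ℝ → ℝ → ℝ) (y : ℝ)
    (hconv : ConvexOn ℝ Set.univ (fun f => L f y))
    (hlsc : LowerSemicontinuous (fun f => L f y))
    (w : Fin d → ℝ) (hw : ∀ j, w j ≠ 0)
    (x β : Fin d → ℝ) (δ : ℝ) (hδ : 0 ≤ δ) :
    IsGreatest {t | ∃ Δ : Fin d → ℝ, p (fun j => w j * Δ j) ≤ δ ∧
        t = L (∑ j, (x j + Δ j) * β j) y}
      (max (L ((∑ j, x j * β j) + δ * dualNorm' p (fun j => β j / w j)) y)
           (L ((∑ j, x j * β j) - δ * dualNorm' p (fun j => β j / w j)) y)) :=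
  stmt4_general p hp L y hconv w hw x β δ hδ
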